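/- For any graph G and any non-negative integer n, box(M_2(G^{f^n})) ≥ box(G^{f^n}) + ⌈n/2⌉, where G^{f^n} is the graph obtained from G by adding n successive focal (universal) vertices. -/

import Mathlib

open SimpleGraph

/-- `G` has a representation by axis-parallel boxes in `ℝ^k`: distinct vertices are
adjacent iff their boxes intersect. -/
def HasBoxRep {V : Type*} (G : SimpleGraph V) (k : ℕ) : Prop :=
  ∃ lo hi : V → Fin k → ℝ,
    ∀ u v : V, u ≠ v →
      (G.Adj u v ↔ ∀ i, max (lo u i) (lo v i) ≤ min (hi u i) (hi v i))

/-- The boxicity of a graph: the least `k` such that `G` has a box representation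
in `ℝ^k` (0 for complete graphs). -/
noncomputable def boxicity {V : Type*} (G : SimpleGraph V) : ℕ :=
  sInf {k | HasBoxRep G k}

/-- An interval graph: an intersection graph of closed intervals on the real line. -/
def IsIntervalGraph {V : Type*} (G : SimpleGraph V) : Prop := HasBoxRep G 1

/-- A cointerval graph: the complement is an interval graph. -/
def Cointerval {V : Type*} (G : SimpleGraph V) : Prop := IsIntervalGraph Gᶜ

/-- The generalized Mycielski graph `M_r(G)`: vertex `none` is the apex `z`,
`some (v, i)` is the copy `v_{i+1}` of `v` in level `i`.  Level `0` induces a copy of `G`,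
consecutive levels are joined by `u_{i-1}v_i, v_{i-1}u_i` for `uv ∈ E(G)`, and `z`
is joined to all vertices of the top level `r-1`. -/
def genMycielski {V : Type*} (G : SimpleGraph V) (r : ℕ) :
    SimpleGraph (Option (V × Fin r)) :=
  SimpleGraph.fromRel (fun a b =>
    match a, b with
    | some (u, i), some (v, j) =>
        (i = j ∧ (i : ℕ) = 0 ∧ G.Adj u v) ∨ ((j : ℕ) = (i : ℕ) + 1 ∧ G.Adj u v)
    | some (_, i), none => (i : ℕ) = r - 1
    | none, _ => False)

/-- A focal (universal) vertex: adjacent to all other vertices. -/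
def IsFocal {V : Type*} (G : SimpleGraph V) (v : V) : Prop :=
  ∀ w, w ≠ v → G.Adj v w

/-- `G` with `n` additional universal vertices, i.e. the `n`-th focalization `G^{fⁿ}`. -/
def addUniversal {V : Type*} (G : SimpleGraph V) (n : ℕ) :
    SimpleGraph (V ⊕ Fin n) :=
  SimpleGraph.fromRel (fun a b =>
    match a, b with
    | Sum.inl u, Sum.inl v => G.Adj u v
    | _, _ => True)

/-- The edge clique cover number: the minimum number of cliques covering all edges. -/
noncomputable def edgeCliqueCoverNumber {V : Type*} (G : SimpleGraph V) : ℕ :=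
  sInf {k | ∃ f : Fin k → Set V, (∀ i, G.IsClique (f i)) ∧
    ∀ u v, G.Adj u v → ∃ i, u ∈ f i ∧ v ∈ f i}

/-- Disjoint union of two graphs. -/
def disjUnionGraph {α β : Type*} (G : SimpleGraph α) (H : SimpleGraph β) :
    SimpleGraph (α ⊕ β) :=
  SimpleGraph.fromRel (fun a b =>
    match a, b with
    | Sum.inl u, Sum.inl v => G.Adj u v
    | Sum.inr u, Sum.inr v => H.Adj u v
    | _, _ => False)

/-- The complete multipartite graph with parts `V i`. -/
def completeMultipartite {ι : Type*} (V : ι → Type*) : SimpleGraph (Σ i, V i) where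
  Adj a b := a.1 ≠ b.1
  symm := ⟨fun _ _ h => Ne.symm h⟩
  loopless := ⟨fun _ h => h rfl⟩

/-!
A universal vertex `t` of `H` gives two non-adjacent vertices `t₁, t₂` of `M₂(H)`, so a box
representation of `M₂(H)` separates their intervals in some coordinate. As `t₁` meets `s₂` for
every other universal vertex `s`, a coordinate separates at most two such pairs: one with the
interval of `t₁` to the left of that of `t₂`, one with it to the right. Hence the `n` universal
vertices need at least `⌈n/2⌉` separating coordinates. In such a coordinate every first-level
copy of a non-universal vertex meets both `t₁` and `t₂`, so its interval covers the gap between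
them, and no two of these copies are separated there. The remaining coordinates therefore
represent the first level, a copy of `H`.
-/

section Intervals

variable {α : Type*} [LinearOrder α]

theorem max_le_min_of_meets_both_of_not_meet {a b c d p q r s : α}
    (hXY : ¬ max a c ≤ min b d) (hpX : max p a ≤ min q b) (hpY : max p c ≤ min q d)
    (hrX : max r a ≤ min s b) (hrY : max r c ≤ min s d) : max p r ≤ min q s := by
  simp only [max_le_iff, le_min_iff, not_and_or, not_le] at *
  rcases hXY with (h | h) | (h | h) <;> refine ⟨⟨?_, ?_⟩, ?_, ?_⟩ <;> order

theorem subsingleton_setOf_lt_of_cross_meet {ι : Type*} {s : Set ι} {a b c d : ι → α}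
    (hmeet : ∀ t ∈ s, ∀ u ∈ s, t ≠ u → max (a t) (c u) ≤ min (b t) (d u)) :
    {t ∈ s | b t < c t}.Subsingleton := by
  rintro t ⟨ht, htc⟩ u ⟨hu, huc⟩
  by_contra htu
  have htu' := hmeet t ht u hu htu
  have hut := hmeet u hu t ht (Ne.symm htu)
  simp only [max_le_iff, le_min_iff] at htu' hut
  order

theorem card_filter_not_meet_le_two {ι : Type*} (s : Finset ι) {a b c d : ι → α}
    (hmeet : ∀ t ∈ s, ∀ u ∈ s, t ≠ u → max (a t) (c u) ≤ min (b t) (d u)) :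
    (s.filter fun t => ¬ max (a t) (c t) ≤ min (b t) (d t)).card ≤ 2 := by
  classical
  rcases le_or_gt s.card 2 with hs | hs
  · exact (Finset.card_filter_le _ _).trans hs
  have hpartner : ∀ t ∈ s, ∃ u ∈ s, t ≠ u := fun t _ =>
    (s.exists_mem_ne (by omega) t).imp fun _ hu => ⟨hu.1, hu.2.symm⟩
  have hleft : (s.filter fun t => b t < c t).card ≤ 1 :=
    Finset.card_le_one.2 fun t ht u hu => subsingleton_setOf_lt_of_cross_meet hmeet
      (by simpa using ht) (by simpa using hu)
  have hright : (s.filter fun t => d t < a t).card ≤ 1 :=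
    Finset.card_le_one.2 fun t ht u hu =>
      subsingleton_setOf_lt_of_cross_meet (a := c) (b := d) (c := a) (d := b)
        (fun t ht u hu htu => by simpa only [max_comm, min_comm] using hmeet u hu t ht htu.symm)
        (by simpa using ht) (by simpa using hu)
  calc (s.filter fun t => ¬ max (a t) (c t) ≤ min (b t) (d t)).card
      ≤ ((s.filter fun t => b t < c t) ∪ s.filter fun t => d t < a t).card := by
        refine Finset.card_le_card fun t ht => ?_
        simp only [Finset.mem_filter, Finset.mem_union, max_le_iff, le_min_iff] at ht ⊢
        obtain ⟨u, hu, htu⟩ := hpartner t ht.1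
        have hX := hmeet t ht.1 u hu htu
        have hY := hmeet u hu t ht.1 htu.symm
        simp only [max_le_iff, le_min_iff] at hX hY
        by_contra! h
        exact ht.2 ⟨⟨hX.1.1, h.1 ht.1⟩, h.2 ht.1, hY.2.2⟩
    _ ≤ 1 + 1 := (Finset.card_union_le _ _).trans (add_le_add hleft hright)

end Intervals

section BoxRep

variable {V ι α : Type*} [LinearOrder α]

def BoxesMeet (lo hi : V → ι → α) (u v : V) (i : ι) : Prop :=
  max (lo u i) (lo v i) ≤ min (hi u i) (hi v i)

def IsBoxRep (G : SimpleGraph V) (lo hi : V → ι → α) : Prop :=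
  ∀ u v, u ≠ v → (G.Adj u v ↔ ∀ i, BoxesMeet lo hi u v i)

instance (lo hi : V → ι → α) (u v : V) (i : ι) : Decidable (BoxesMeet lo hi u v i) :=
  inferInstanceAs (Decidable (_ ≤ _))

variable {G : SimpleGraph V} {lo hi : V → ι → α}

theorem IsBoxRep.boxesMeet_of_adj (h : IsBoxRep G lo hi) {u v : V} (huv : G.Adj u v) (i : ι) :
    BoxesMeet lo hi u v i :=
  (h u v huv.ne).1 huv i

theorem IsBoxRep.exists_not_boxesMeet (h : IsBoxRep G lo hi) {u v : V} (hne : u ≠ v)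
    (huv : ¬ G.Adj u v) : ∃ i, ¬ BoxesMeet lo hi u v i := by
  by_contra! hmeet
  exact huv ((h u v hne).2 hmeet)

theorem IsBoxRep.comap {W : Type*} {H : SimpleGraph W} (h : IsBoxRep G lo hi) (f : H ↪g G)
    (T : Finset ι)
    (hT : ∀ u v, u ≠ v → ¬ H.Adj u v → ∀ i ∉ T, BoxesMeet lo hi (f u) (f v) i) :
    IsBoxRep H (fun v (i : T) => lo (f v) i) (fun v i => hi (f v) i) := by
  intro u v hne
  refine ⟨fun huv i => h.boxesMeet_of_adj (f.map_adj_iff.2 huv) i, fun hall => ?_⟩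
  by_contra huv
  obtain ⟨i, hi⟩ := h.exists_not_boxesMeet (f.injective.ne hne) (mt f.map_adj_iff.1 huv)
  by_cases hiT : i ∈ T
  · exact hi (hall ⟨i, hiT⟩)
  · exact hi (hT u v hne huv i hiT)

theorem IsBoxRep.hasBoxRep [Fintype ι] {lo hi : V → ι → ℝ} (h : IsBoxRep G lo hi) :
    HasBoxRep G (Fintype.card ι) :=
  let e := Fintype.equivFin ι
  ⟨fun v i => lo v (e.symm i), fun v i => hi v (e.symm i), fun u v hne =>
    (h u v hne).trans
      ⟨fun hall _ => hall _, fun hall i => e.symm_apply_apply i ▸ hall (e i)⟩⟩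

-- One coordinate per non-edge `(a, b)`: `a` gets `[0, 0]`, `b` gets `[1, 1]`, all others `[0, 1]`.
theorem isBoxRep_nonEdges [DecidableEq V] (G : SimpleGraph V) :
    IsBoxRep G (ι := {p : V × V // p.1 ≠ p.2 ∧ ¬ G.Adj p.1 p.2})
      (fun v p => if v = p.1.2 then (1 : ℝ) else 0) (fun v p => if v = p.1.1 then 0 else 1) := by
  intro u v hne
  constructor
  · rintro huv ⟨⟨a, b⟩, hab, hnadj⟩
    simp only [BoxesMeet]
    split_ifs <;> simp_all [G.adj_comm]
  · intro hall
    by_contra huv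
    have := hall ⟨(u, v), hne, huv⟩
    norm_num [BoxesMeet, hne] at this

theorem exists_hasBoxRep [Finite V] (G : SimpleGraph V) : ∃ k, HasBoxRep G k := by
  classical
  have := Fintype.ofFinite V
  exact ⟨_, (isBoxRep_nonEdges G).hasBoxRep⟩

theorem exists_isBoxRep_boxicity [Finite V] (G : SimpleGraph V) :
    ∃ lo hi : V → Fin (boxicity G) → ℝ, IsBoxRep G lo hi :=
  Nat.sInf_mem (exists_hasBoxRep G)

theorem boxicity_le {k : ℕ} (h : HasBoxRep G k) : boxicity G ≤ k :=
  Nat.sInf_le h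

end BoxRep

section Mycielski

variable {W : Type*} (H : SimpleGraph W)

theorem genMycielski_adj_zero_zero {r : ℕ} (u v : W) :
    (genMycielski H (r + 1)).Adj (some (u, 0)) (some (v, 0)) ↔ H.Adj u v := by
  simp only [genMycielski, fromRel_adj]
  simpa [H.adj_comm v u] using fun h : H.Adj u v => h.ne

theorem genMycielski_adj_zero_one {r : ℕ} (u v : W) :
    (genMycielski H (r + 2)).Adj (some (u, 0)) (some (v, 1)) ↔ H.Adj u v := by
  simp [genMycielski, fromRel_adj]

def genMycielskiLevelZero (r : ℕ) : H ↪g genMycielski H (r + 1) where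
  toFun v := some (v, 0)
  inj' _ _ h := by simpa using h
  map_rel_iff' := genMycielski_adj_zero_zero H _ _

variable {H} {ι α : Type*} [LinearOrder α] {lo hi : Option (W × Fin 2) → ι → α}

theorem IsBoxRep.card_filter_not_boxesMeet_le_two (h : IsBoxRep (genMycielski H 2) lo hi)
    {U : Finset W} (hU : ∀ t ∈ U, IsFocal H t) (i : ι) :
    (U.filter fun t => ¬ BoxesMeet lo hi (some (t, 0)) (some (t, 1)) i).card ≤ 2 :=
  card_filter_not_meet_le_two U fun t ht u _ htu =>
    h.boxesMeet_of_adj ((genMycielski_adj_zero_one H t u).2 (hU t ht u htu.symm)) i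

theorem IsBoxRep.boxesMeet_zero_of_not_boxesMeet (h : IsBoxRep (genMycielski H 2) lo hi)
    {t : W} (ht : IsFocal H t) {i : ι} (hsep : ¬ BoxesMeet lo hi (some (t, 0)) (some (t, 1)) i)
    {u v : W} (hu : u ≠ t) (hv : v ≠ t) : BoxesMeet lo hi (some (u, 0)) (some (v, 0)) i :=
  max_le_min_of_meets_both_of_not_meet hsep
    (h.boxesMeet_of_adj ((genMycielski_adj_zero_zero H u t).2 (ht u hu).symm) i)
    (h.boxesMeet_of_adj ((genMycielski_adj_zero_one H u t).2 (ht u hu).symm) i)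
    (h.boxesMeet_of_adj ((genMycielski_adj_zero_zero H v t).2 (ht v hv).symm) i)
    (h.boxesMeet_of_adj ((genMycielski_adj_zero_one H v t).2 (ht v hv).symm) i)

variable (H)

theorem boxicity_add_le_boxicity_genMycielski [Finite W] (U : Finset W)
    (hU : ∀ t ∈ U, IsFocal H t) :
    boxicity H + (U.card + 1) / 2 ≤ boxicity (genMycielski H 2) := by
  classical
  obtain ⟨lo, hi, h⟩ := exists_isBoxRep_boxicity (genMycielski H 2)
  let Separated t i := ¬ BoxesMeet lo hi (some (t, 0)) (some (t, 1)) i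
  let S := Finset.univ.filter fun i => ∃ t ∈ U, Separated t i
  have hUS : U.card * 1 ≤ S.card * 2 := by
    refine Finset.card_mul_le_card_mul Separated (fun t ht => ?_)
      fun i _ => h.card_filter_not_boxesMeet_le_two hU i
    obtain ⟨i, hi⟩ := h.exists_not_boxesMeet (u := some (t, 0)) (v := some (t, 1)) (by simp)
      fun hadj => H.irrefl ((genMycielski_adj_zero_one H t t).1 hadj)
    exact Finset.one_le_card.2 ⟨i, by simpa [S] using ⟨⟨t, ht, hi⟩, hi⟩⟩
  have hrep := h.comap (genMycielskiLevelZero H 1) Sᶜ fun u v huv hnadj i hi => by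
    obtain ⟨t, ht, hsep⟩ := by simpa [S] using hi
    refine h.boxesMeet_zero_of_not_boxesMeet (hU t ht) hsep ?_ ?_
    · rintro rfl; exact hnadj (hU u ht v huv.symm)
    · rintro rfl; exact hnadj (hU v ht u huv).symm
  have hbox : boxicity H ≤ boxicity (genMycielski H 2) - S.card := by
    simpa [Finset.card_compl] using boxicity_le hrep.hasBoxRep
  have hS : S.card ≤ boxicity (genMycielski H 2) := S.card_le_univ.trans_eq (Fintype.card_fin _)
  omega

end Mycielski

theorem isFocal_addUniversal_inr {V : Type*} (G : SimpleGraph V) (n : ℕ) (t : Fin n) :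
    IsFocal (addUniversal G n) (Sum.inr t) := by
  intro w hw
  cases w <;> simp_all [addUniversal, eq_comm]

/-- `box(M₂(G^{fⁿ})) ≥ box(G^{fⁿ}) + ⌈n/2⌉`. -/
theorem boxicity_mycielski_focalization {V : Type*} [Fintype V]
    (G : SimpleGraph V) (n : ℕ) :
    boxicity (addUniversal G n) + (n + 1) / 2 ≤
      boxicity (genMycielski (addUniversal G n) 2) := by
  simpa using boxicity_add_le_boxicity_genMycielski (addUniversal G n)
    (Finset.univ.map Function.Embedding.inr) (by simpa using isFocal_addUniversal_inr G n)
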